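/- Let P_1,…,P_ℓ be vertex-disjoint induced paths of a finite simple block graph G, each equipped with an orientation φ_i, and suppose that P_ind does not contain an internal strand, an internal fork, a double fork, or a complete ladder. Let γ_1 be a strand from P_a to P_b and γ_2 be a strand from P_b to P_c. If V(γ_1) ∩ V(γ_2) ≠ ∅, then K_{P_ind} contains the arc (a,c). -/

import Mathlib

open SimpleGraph

/-- An induced path in a simple graph `G`: a walk which is a path and such that the
subgraph of `G` induced on its vertex set equals the path. -/
structure InducedPath {V : Type*} (G : SimpleGraph V) where
  first : V
  last : V
  walk : G.Walk first last
  isPath : walk.IsPath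
  induced : ∀ x ∈ walk.support, ∀ y ∈ walk.support, G.Adj x y → s(x, y) ∈ walk.edges

namespace InducedPath

variable {V : Type*} {G : SimpleGraph V}

/-- The vertex set of an induced path. -/
def vertexSet (P : InducedPath G) : Set V := {v | v ∈ P.walk.support}

/-- The edge set of an induced path. -/
def edgeSet (P : InducedPath G) : Set (Sym2 V) := {e | e ∈ P.walk.edges}

/-- The terminal vertices `∂P` of an induced path. -/
def boundary (P : InducedPath G) : Set V := {P.first, P.last}

/-- The internal vertices `P°` of an induced path. -/
def interior (P : InducedPath G) : Set V := P.vertexSet \ P.boundary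

end InducedPath

section FamilyDefs

variable {V : Type*} (G : SimpleGraph V) {ℓ : ℕ}

/-- `Q` contains `P` as a subgraph. -/
def PathContains (Q P : InducedPath G) : Prop :=
  P.vertexSet ⊆ Q.vertexSet ∧ P.edgeSet ⊆ Q.edgeSet

/-- The vertex set of `P_ind`, the induced subgraph on `⋃ i, V(P i)`. -/
def famVerts (P : Fin ℓ → InducedPath G) : Set V := ⋃ i, (P i).vertexSet

/-- The union of the edge sets of the paths `P i`. -/
def famEdges (P : Fin ℓ → InducedPath G) : Set (Sym2 V) := ⋃ i, (P i).edgeSet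

/-- The paths `P i` are pairwise vertex-disjoint. -/
def PairwiseVertexDisjoint (P : Fin ℓ → InducedPath G) : Prop :=
  ∀ i j : Fin ℓ, i ≠ j → Disjoint (P i).vertexSet (P j).vertexSet

/-- `φ` is an orientation of the induced path `P`, i.e. a surjection `{1,2} → ∂P`. -/
def IsOrientation (P : InducedPath G) (φ : Fin 2 → V) : Prop :=
  Set.range φ = P.boundary

/-- `Q` is an induced path of `P_ind` (equivalently, an induced path of `G` all of whose
vertices belong to `⋃ i, V(P i)`). -/
def IsPathOfInd (P : Fin ℓ → InducedPath G) (Q : InducedPath G) : Prop :=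
  Q.vertexSet ⊆ famVerts G P

/-- The data `(P, σ, φ)` is DOIP. -/
def IsDOIPData (P : Fin ℓ → InducedPath G) (σ : Equiv.Perm (Fin ℓ))
    (φ : Fin ℓ → Fin 2 → V) : Prop :=
  (∀ i, IsOrientation G (P i) (φ i)) ∧
    ∀ i j : Fin ℓ, σ i ≤ σ j → ∀ Q : InducedPath G, IsPathOfInd G P Q →
      ({Q.first, Q.last} : Set V) = {φ (σ i) 0, φ (σ j) 1} →
      ∃ k, PathContains G Q (P k)

/-- The family `P` is DOIP: there exist `σ` and orientations making it DOIP. -/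
def FamilyDOIP (P : Fin ℓ → InducedPath G) : Prop :=
  ∃ (σ : Equiv.Perm (Fin ℓ)) (φ : Fin ℓ → Fin 2 → V), IsDOIPData G P σ φ

/-- `Q` realizes an arc `(i,j)` of the directed multigraph `K_{P_ind}`. -/
def KArcWitness (P : Fin ℓ → InducedPath G) (φ : Fin ℓ → Fin 2 → V) (i j : Fin ℓ)
    (Q : InducedPath G) : Prop :=
  IsPathOfInd G P Q ∧ ({Q.first, Q.last} : Set V) = {φ i 0, φ j 1} ∧
    ∀ k, ¬ PathContains G Q (P k)

/-- `(i,j)` is an arc of `K_{P_ind}`. -/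
def KArc (P : Fin ℓ → InducedPath G) (φ : Fin ℓ → Fin 2 → V) (i j : Fin ℓ) : Prop :=
  ∃ Q : InducedPath G, KArcWitness G P φ i j Q

/-- The directed multigraph `K_{P_ind}` is directed acyclic (no loops and no directed
cycles). -/
def KAcyclic (P : Fin ℓ → InducedPath G) (φ : Fin ℓ → Fin 2 → V) : Prop :=
  ∀ i : Fin ℓ, ¬ Relation.TransGen (KArc G P φ) i i

/-- `Q` is a strand of `P_ind` from `P i` to `P j`. -/
def IsStrand (P : Fin ℓ → InducedPath G) (φ : Fin ℓ → Fin 2 → V) (i j : Fin ℓ)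
    (Q : InducedPath G) : Prop :=
  i ≠ j ∧ IsPathOfInd G P Q ∧ Q.first ≠ φ i 1 ∧ Q.last ≠ φ j 0 ∧
    Q.vertexSet ∩ (P i).vertexSet = {Q.first} ∧
    Q.vertexSet ∩ (P j).vertexSet = {Q.last} ∧
    ∀ k, ¬ PathContains G Q (P k)

/-- `Q` is an internal strand of `P_ind` from `P i` to `P j`. -/
def IsInternalStrand (P : Fin ℓ → InducedPath G) (i j : Fin ℓ) (Q : InducedPath G) : Prop :=
  i ≠ j ∧ IsPathOfInd G P Q ∧
    Q.first ∈ (P i).interior ∧ Q.last ∈ (P j).interior ∧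
    Q.vertexSet ∩ (P i).vertexSet = {Q.first} ∧
    Q.vertexSet ∩ (P j).vertexSet = {Q.last} ∧
    ∀ k, ¬ PathContains G Q (P k)

/-- `(Q, b, c)` is an internal fork of `P_ind` from `P i` to `P j`. -/
def IsInternalFork (P : Fin ℓ → InducedPath G) (i j : Fin ℓ) (Q : InducedPath G)
    (b c : V) : Prop :=
  i ≠ j ∧ IsPathOfInd G P Q ∧ Q.first ∈ (P i).interior ∧
    Q.vertexSet ∩ (P i).vertexSet = {Q.first} ∧
    Q.vertexSet ∩ (P j).vertexSet = ∅ ∧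
    b ∈ (P j).vertexSet ∧ c ∈ (P j).vertexSet ∧ b ≠ c ∧
    G.Adj Q.last b ∧ G.Adj Q.last c ∧
    ∀ k, ¬ PathContains G Q (P k)

/-- `(Q, a, b, c, d)` is a double fork of `P_ind` from `P i` to `P j`. -/
def IsDoubleFork (P : Fin ℓ → InducedPath G) (i j : Fin ℓ) (Q : InducedPath G)
    (a b c d : V) : Prop :=
  i ≠ j ∧ IsPathOfInd G P Q ∧
    Q.vertexSet ∩ (P i).vertexSet = ∅ ∧
    Q.vertexSet ∩ (P j).vertexSet = ∅ ∧
    a ∈ (P i).vertexSet ∧ b ∈ (P i).vertexSet ∧ a ≠ b ∧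
    c ∈ (P j).vertexSet ∧ d ∈ (P j).vertexSet ∧ c ≠ d ∧
    G.Adj Q.first a ∧ G.Adj Q.first b ∧ G.Adj Q.last c ∧ G.Adj Q.last d ∧
    ∀ k, ¬ PathContains G Q (P k)

/-- `(a, b, c, d)` is a complete ladder of `P_ind` between `P i` and `P j`. -/
def IsCompleteLadder (P : Fin ℓ → InducedPath G) (i j : Fin ℓ) (a b c d : V) : Prop :=
  i ≠ j ∧ a ∈ (P i).vertexSet ∧ b ∈ (P i).vertexSet ∧ a ≠ b ∧
    c ∈ (P j).vertexSet ∧ d ∈ (P j).vertexSet ∧ c ≠ d ∧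
    G.Adj a b ∧ G.Adj a c ∧ G.Adj a d ∧ G.Adj b c ∧ G.Adj b d ∧ G.Adj c d

/-- `P_ind` contains an internal strand, an internal fork, a double fork, or a
complete ladder. -/
def HasForbidden (P : Fin ℓ → InducedPath G) : Prop :=
  (∃ i j Q, IsInternalStrand G P i j Q) ∨
  (∃ i j Q b c, IsInternalFork G P i j Q b c) ∨
  (∃ i j Q a b c d, IsDoubleFork G P i j Q a b c d) ∨
  (∃ i j a b c d, IsCompleteLadder G P i j a b c d)

/-- `P_ind` contains a complete ladder, or an internal strand, internal fork, or double
fork which is edge-disjoint from the family `P`. -/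
def HasForbiddenEdgeDisjoint (P : Fin ℓ → InducedPath G) : Prop :=
  (∃ i j Q, IsInternalStrand G P i j Q ∧ Disjoint Q.edgeSet (famEdges G P)) ∨
  (∃ i j Q b c, IsInternalFork G P i j Q b c ∧
    Disjoint (Q.edgeSet ∪ {s(Q.last, b), s(Q.last, c)}) (famEdges G P)) ∨
  (∃ i j Q a b c d, IsDoubleFork G P i j Q a b c d ∧
    Disjoint (Q.edgeSet ∪ {s(Q.first, a), s(Q.first, b), s(Q.last, c), s(Q.last, d)})
      (famEdges G P)) ∨
  (∃ i j a b c d, IsCompleteLadder G P i j a b c d)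

end FamilyDefs

section Invariants

variable {V : Type*}

/-- The invariant `ν(G)`: the maximal total number of edges of a family of
vertex-disjoint induced paths of `G` which is DOIP. -/
noncomputable def nu (G : SimpleGraph V) : ℕ :=
  sSup {n : ℕ | ∃ (ℓ : ℕ) (P : Fin ℓ → InducedPath G),
    PairwiseVertexDisjoint G P ∧ FamilyDOIP G P ∧ n = ∑ i, (P i).walk.length}

/-- `ℓ(G)`: the number of edges of a longest induced path of `G`. -/
noncomputable def longestInducedPathLength (G : SimpleGraph V) : ℕ :=
  sSup {n : ℕ | ∃ P : InducedPath G, n = P.walk.length}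

end Invariants

section BlockGraphs

variable {V : Type*} {G : SimpleGraph V}

/-- A subgraph is biconnected if it is connected and remains connected after
deleting any single vertex. -/
def SubgraphBiconnected (H : G.Subgraph) : Prop :=
  H.coe.Connected ∧ ∀ v : V, ((H.deleteVerts {v}).coe).Connected

/-- A block of `G` is a maximal biconnected subgraph. -/
def IsBlock (H : G.Subgraph) : Prop :=
  SubgraphBiconnected H ∧ ∀ H' : G.Subgraph, SubgraphBiconnected H' → H ≤ H' → H' = H

/-- `G` is a block graph if every block of `G` is a complete graph. -/
def IsBlockGraph (G : SimpleGraph V) : Prop :=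
  ∀ H : G.Subgraph, IsBlock H → ∀ a ∈ H.verts, ∀ b ∈ H.verts, a ≠ b → H.Adj a b

/-- The intersection `Q ∩ R` of two induced paths, as a subgraph of `G`. -/
def pathsInter (Q R : InducedPath G) : G.Subgraph where
  verts := Q.vertexSet ∩ R.vertexSet
  Adj a b := G.Adj a b ∧ s(a, b) ∈ Q.walk.edges ∧ s(a, b) ∈ R.walk.edges
  adj_sub h := h.1
  edge_vert h := ⟨Q.walk.fst_mem_support_of_mem_edges h.2.1,
    R.walk.fst_mem_support_of_mem_edges h.2.2⟩
  symm := by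
    constructor
    intro a b h
    refine ⟨h.1.symm, ?_, ?_⟩
    · rw [Sym2.eq_swap]; exact h.2.1
    · rw [Sym2.eq_swap]; exact h.2.2

/-- `s` is a maximal clique of `G`. -/
def IsMaxClique (G : SimpleGraph V) (s : Set V) : Prop :=
  G.IsClique s ∧ ∀ t : Set V, G.IsClique t → s ⊆ t → s = t

/-- `G` has the two-block property: every vertex belongs to at most two maximal
cliques. -/
def TwoBlockProperty (G : SimpleGraph V) : Prop :=
  ∀ v : V, ({s : Set V | IsMaxClique G s ∧ v ∈ s}).ncard ≤ 2

/-- The completion `G_c` of `G` at the vertex `c`. -/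
def completionAt (G : SimpleGraph V) (c : V) : SimpleGraph V where
  Adj u w := G.Adj u w ∨ (u ≠ w ∧ G.Adj c u ∧ G.Adj c w)
  symm := by
    constructor
    intro u w h
    rcases h with h | ⟨hne, h1, h2⟩
    · exact Or.inl h.symm
    · exact Or.inr ⟨hne.symm, h2, h1⟩
  loopless := by
    constructor
    intro u h
    rcases h with h | ⟨hne, _, _⟩
    · exact G.irrefl h
    · exact hne rfl

/-- The number of connected components of a graph. -/
noncomputable def numComponents (G : SimpleGraph V) : ℕ :=
  Nat.card G.ConnectedComponent

/-- `c` is a cut vertex of `G`: deleting it strictly increases the number of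
connected components. -/
def IsCutVertex (G : SimpleGraph V) (c : V) : Prop :=
  numComponents G < numComponents (G.induce ({c}ᶜ : Set V))

end BlockGraphs

/-!
In a block graph every cycle spans a clique, so a chordless path is determined by its two ends.
Hence, where a strand `γ₁` into `P b` meets a strand `γ₂` out of `P b`, their common part is
attached to `P b`: either both strands touch `P b` in the same internal vertex, or the last vertex
of `γ₁` on `γ₂` is adjacent to both of their vertices on `P b`. A piece of the common part of two
strands that is attached to two different paths of the family at its two ends is an internal
strand, an internal fork or a double fork. This excludes meeting strands in opposite directions
(so `a ≠ c`), a vertex `φ a 1` on `γ₂` or `φ c 0` on `γ₁`, and another path of the family lying on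
`γ₁ ∪ γ₂`. So no path of the family lies on the walk that runs along `P a` from `φ a 0` to `γ₁`,
along `γ₁` to a common vertex `v`, along `γ₂` to `P c` and along `P c` to `φ c 1`, and an induced
path inside this walk realizes the arc `(a, c)`.
-/

theorem inter_eq_singleton_of_subset {α : Type*} {S T U : Set α} {x : α} (hST : S ⊆ T)
    (hT : T ∩ U = {x}) (hx : x ∈ S) : S ∩ U = {x} :=
  Set.Subset.antisymm (fun _ hz => hT ▸ ⟨hST hz.1, hz.2⟩)
    (Set.singleton_subset_iff.2 ⟨hx, (Set.eq_singleton_iff_unique_mem.1 hT).1.2⟩)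

namespace SimpleGraph.Walk

variable {V : Type*} {G : SimpleGraph V} {u v w m z : V}

theorem exists_append_first_mem (p : G.Walk u v) {S : Set V} (h : ∃ z ∈ p.support, z ∈ S) :
    ∃ m ∈ S, ∃ (q : G.Walk u m) (r : G.Walk m v), p = q.append r ∧
      ∀ z ∈ q.support, z ∈ S → z = m := by
  induction p with
  | nil =>
    obtain ⟨z, hz, hzS⟩ := h
    rw [mem_support_nil_iff] at hz
    subst hz
    exact ⟨_, hzS, nil, nil, rfl, by simp⟩
  | @cons a b c hab p ih =>
    by_cases haS : a ∈ S
    · exact ⟨a, haS, nil, cons hab p, rfl, by simp⟩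
    · obtain ⟨m, hmS, q, r, rfl, hq⟩ := ih (by simpa [haS] using h)
      refine ⟨m, hmS, cons hab q, r, rfl, ?_⟩
      simp only [support_cons, List.mem_cons, forall_eq_or_imp]
      exact ⟨fun h => absurd h haS, hq⟩

theorem exists_append_last_mem (p : G.Walk u v) {S : Set V} (h : ∃ z ∈ p.support, z ∈ S) :
    ∃ m ∈ S, ∃ (q : G.Walk u m) (r : G.Walk m v), p = q.append r ∧
      ∀ z ∈ r.support, z ∈ S → z = m := by
  obtain ⟨m, hmS, q, r, hp, hq⟩ := p.reverse.exists_append_first_mem (by simpa using h)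
  refine ⟨m, hmS, r.reverse, q.reverse, ?_, by simpa using hq⟩
  rw [← reverse_append, ← hp, reverse_reverse]

theorem IsPath.eq_of_mem_support_append {q : G.Walk u m} {r : G.Walk m v}
    (h : (q.append r).IsPath) (hq : z ∈ q.support) (hr : z ∈ r.support) : z = m := by
  by_contra hzm
  exact h.ne_of_mem_support_of_append hzm hq hr rfl

theorem IsPath.exists_prefix {p : G.Walk u v} (hp : p.IsPath) (hw : w ∈ p.support) :
    ∃ q : G.Walk u w, q.support ⊆ p.support ∧ (v ∈ q.support → v = w) := by
  classical
  exact ⟨p.takeUntil w hw, p.support_takeUntil_subset_support hw,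
    fun h => by_contra fun hvw => endpoint_notMem_support_takeUntil hp hw hvw h⟩

theorem IsPath.exists_suffix {p : G.Walk u v} (hp : p.IsPath) (hw : w ∈ p.support) :
    ∃ q : G.Walk w v, q.support ⊆ p.support ∧ (u ∈ q.support → u = w) := by
  classical
  exact ⟨p.dropUntil w hw, p.support_dropUntil_subset_support hw,
    (p.take_spec hw ▸ hp).eq_of_mem_support_append (p.takeUntil w hw).start_mem_support⟩

theorem IsPath.append_of_support_inter {q : G.Walk u m} {r : G.Walk m v} (hq : q.IsPath)
    (hr : r.IsPath) (h : ∀ z ∈ q.support, z ∈ r.support → z = m) : (q.append r).IsPath := by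
  rw [isPath_def, support_append, List.nodup_append]
  refine ⟨hq.support_nodup, hr.support_nodup.sublist r.support.tail_sublist, ?_⟩
  rintro z hzq z' hz'r rfl
  obtain rfl := h z hzq (List.mem_of_mem_tail hz'r)
  have hnd := hr.support_nodup
  rw [← cons_tail_support, List.nodup_cons] at hnd
  exact hnd.1 hz'r

theorem one_lt_length_of_mem_support {p : G.Walk u v} (hw : w ∈ p.support) (hwu : w ≠ u)
    (hwv : w ≠ v) : 1 < p.length := by
  match p with
  | .nil => simp_all
  | .cons _ .nil => simp_all
  | .cons _ (.cons _ _) => simp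

theorem mem_edges_of_length_eq_one {p : G.Walk u v} (h : p.length = 1) : s(u, v) ∈ p.edges := by
  match p, h with
  | .cons _ .nil, _ => simp

theorem IsChordless.reverse {p : G.Walk u v} (h : p.IsChordless) : p.reverse.IsChordless := by
  rw [isChordless_iff_forall_mem_edges] at h ⊢
  simpa using h

theorem IsChordless.of_isSubwalk {p : G.Walk u v} {q : G.Walk w m} (hq : q.IsPath)
    (hqc : q.IsChordless) (h : p.IsSubwalk q) : p.IsChordless := by
  obtain ⟨r₁, r₂, rfl⟩ := h
  rw [isChordless_iff_forall_mem_edges]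
  intro a b ha hb hab
  have hmem := hqc.mem_edges (by simp [ha]) (by simp [hb]) hab
  simp only [edges_append, List.mem_append] at hmem
  rcases hmem with (h₁ | h) | h₂
  · have hr₁ := hq.of_append_left
    exact absurd ((hr₁.eq_of_mem_support_append (r₁.fst_mem_support_of_mem_edges h₁) ha).trans
      (hr₁.eq_of_mem_support_append (r₁.snd_mem_support_of_mem_edges h₁) hb).symm) hab.ne
  · exact h
  · exact absurd ((hq.eq_of_mem_support_append (by simp [ha])
      (r₂.fst_mem_support_of_mem_edges h₂)).trans (hq.eq_of_mem_support_append (by simp [hb])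
      (r₂.snd_mem_support_of_mem_edges h₂)).symm) hab.ne

theorem IsChordless.eq_or_eq_of_adj {p : G.Walk u v} (hp : p.IsPath) (hc : p.IsChordless)
    (huv : G.Adj u v) (hz : z ∈ p.support) : z = u ∨ z = v := by
  rw [hp.eq_adj_toWalk_of_mem_edges (hc.mem_edges p.start_mem_support p.end_mem_support huv)]
    at hz
  simpa using hz

/-- A chord of `p` would give a shorter walk through the vertices of `p`. -/
theorem isChordless_of_forall_length_le {p : G.Walk u v}
    (hmin : ∀ q : G.Walk u v, q.support ⊆ p.support → p.length ≤ q.length) : p.IsChordless := by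
  rw [isChordless_iff_forall_mem_edges]
  intro a b ha hb hab
  by_contra hne
  obtain ⟨m, hm, q, r, rfl, hq⟩ := p.exists_append_first_mem (S := {a, b}) ⟨a, ha, .inl rfl⟩
  obtain ⟨o, ho, hoab, hmo⟩ : ∃ o ∈ (q.append r).support, o ∈ ({a, b} : Set V) ∧
      s(m, o) = s(a, b) := by
    rcases hm with rfl | rfl
    exacts [⟨b, hb, .inr rfl, rfl⟩, ⟨a, ha, .inl rfl, Sym2.eq_swap⟩]
  have hadj : G.Adj m o := by rw [← G.mem_edgeSet, hmo]; exact hab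
  have hor : o ∈ r.support := ((mem_support_append_iff _ _).1 ho).resolve_left
    fun h => hadj.ne (hq o h hoab).symm
  obtain ⟨r₁, r₂, rfl⟩ := mem_support_iff_exists_append.1 hor
  have hlen := hmin (q.append (cons hadj r₂)) fun z hz => by
    simp only [mem_support_append_iff, support_cons, List.mem_cons] at hz ⊢
    rcases hz with hz | rfl | hz
    exacts [.inl hz, .inl q.end_mem_support, .inr (.inr hz)]
  simp only [length_append, length_cons] at hlen
  have hr₁ : r₁.length = 1 := by
    have : r₁.length ≠ 0 := fun h => hadj.ne (eq_of_length_eq_zero h)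
    omega
  apply hne
  rw [← hmo, edges_append, edges_append]
  exact List.mem_append_right _ (List.mem_append_left _ (mem_edges_of_length_eq_one hr₁))

def IsSegment {x y : V} (σ : G.Walk x y) (p : G.Walk u v) : Prop :=
  σ.IsSubwalk p ∨ σ.reverse.IsSubwalk p

namespace IsSegment

variable {x y : V} {σ : G.Walk x y} {p : G.Walk u v}

theorem support_subset (h : σ.IsSegment p) : σ.support ⊆ p.support := by
  rcases h with h | h
  · exact h.support_subset
  · simpa using h.support_subset

theorem edges_subset (h : σ.IsSegment p) : σ.edges ⊆ p.edges := by
  rcases h with h | h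
  · exact h.edges_subset
  · simpa using h.edges_subset

theorem isPath (h : σ.IsSegment p) (hp : p.IsPath) : σ.IsPath := by
  rcases h with h | h
  · exact isPath_of_isSubwalk h hp
  · exact (isPath_reverse_iff _).1 (isPath_of_isSubwalk h hp)

theorem isChordless (h : σ.IsSegment p) (hp : p.IsPath) (hc : p.IsChordless) :
    σ.IsChordless := by
  rcases h with h | h
  · exact hc.of_isSubwalk hp h
  · simpa using (hc.of_isSubwalk hp h).reverse

end IsSegment

theorem exists_isSegment (p : G.Walk u v) {x y : V} (hx : x ∈ p.support)
    (hy : y ∈ p.support) : ∃ σ : G.Walk x y, σ.IsSegment p := by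
  classical
  rw [← p.take_spec hx, mem_support_append_iff] at hy
  rcases hy with hy | hy
  · refine ⟨((p.takeUntil x hx).dropUntil y hy).reverse, Or.inr ?_⟩
    rw [reverse_reverse]
    exact (isSubwalk_dropUntil _ hy).trans (isSubwalk_takeUntil _ hx)
  · exact ⟨(p.dropUntil x hx).takeUntil y hy,
      Or.inl ((isSubwalk_takeUntil _ hy).trans (isSubwalk_dropUntil _ hx))⟩

namespace IsCycle

variable {c : G.Walk u u}

theorem mem_support_tail_reverse_tail_iff (hc : c.IsCycle) {x : V} :
    x ∈ c.tail.reverse.tail.support ↔ x ∈ c.support ∧ x ≠ u := by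
  have hrev : ¬ c.tail.reverse.Nil := not_nil_of_ne (c.adj_snd hc.not_nil).ne
  have hnd := hc.isPath_tail.reverse.support_nodup
  rw [← cons_support_tail hrev, List.nodup_cons] at hnd
  have hsupp : x ∈ c.support ↔ x = u ∨ x ∈ c.tail.reverse.support := by
    rw [← cons_support_tail hc.not_nil, support_reverse]; simp
  rw [hsupp, ← cons_support_tail hrev, List.mem_cons]
  constructor
  · intro hx; exact ⟨.inr (.inr hx), by rintro rfl; exact hnd.1 hx⟩
  · rintro ⟨hx | hx | hx, hxu⟩ <;> first | exact absurd hx hxu | exact hx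

theorem connected_deleteVerts_start (hc : c.IsCycle) :
    (c.toSubgraph.deleteVerts {u}).Connected := by
  refine Subgraph.Connected.mono ⟨fun x hx => ?_, fun x y hxy => ?_⟩ ?_
    c.tail.reverse.tail.toSubgraph_connected
  · simpa [hc.mem_support_tail_reverse_tail_iff] using hx
  · have hx := hc.mem_support_tail_reverse_tail_iff.1 (mem_support_of_adj_toSubgraph hxy)
    have hy := hc.mem_support_tail_reverse_tail_iff.1 (mem_support_of_adj_toSubgraph hxy.symm)
    rw [adj_toSubgraph_iff_mem_edges, edges_tail, edges_reverse] at hxy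
    simp only [Subgraph.deleteVerts_adj, mem_verts_toSubgraph, Set.mem_singleton_iff]
    refine ⟨hx.1, hx.2, hy.1, hy.2, ?_⟩
    rw [adj_toSubgraph_iff_mem_edges, ← cons_tail_eq c hc.not_nil, edges_cons]
    exact List.mem_cons_of_mem _ (List.mem_reverse.1 (List.mem_of_mem_tail hxy))
  · ext x; simp [hc.mem_support_tail_reverse_tail_iff]

theorem subgraphBiconnected (hc : c.IsCycle) : SubgraphBiconnected c.toSubgraph := by
  classical
  refine ⟨c.toSubgraph_connected.coe, fun w => ?_⟩
  by_cases hw : w ∈ c.support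
  · rw [← c.toSubgraph_rotate hw]
    exact (hc.rotate hw).connected_deleteVerts_start.coe
  · refine (Subgraph.Connected.mono ⟨fun x hx => ?_, fun x y hxy => ?_⟩ ?_
      c.toSubgraph_connected).coe
    · exact ⟨hx, by simpa using fun h : x = w => hw (h ▸ c.mem_verts_toSubgraph.1 hx)⟩
    · have hx := c.mem_support_of_adj_toSubgraph hxy
      have hy := c.mem_support_of_adj_toSubgraph hxy.symm
      simp only [Subgraph.deleteVerts_adj, mem_verts_toSubgraph, Set.mem_singleton_iff]
      exact ⟨hx, by rintro rfl; exact hw hx, hy, by rintro rfl; exact hw hy, hxy⟩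
    · ext x
      simp only [Subgraph.deleteVerts_verts, mem_verts_toSubgraph, Set.mem_sdiff,
        Set.mem_singleton_iff]
      exact ⟨fun hx => ⟨hx, by rintro rfl; exact hw hx⟩, And.left⟩

end IsCycle

end SimpleGraph.Walk

section BlockGraph

variable {V : Type*} {G : SimpleGraph V} [Finite V] {u v : V}

theorem SubgraphBiconnected.exists_isBlock_le {H : G.Subgraph} (hH : SubgraphBiconnected H) :
    ∃ B : G.Subgraph, IsBlock B ∧ H ≤ B := by
  obtain ⟨B, ⟨hB, hHB⟩, hmax⟩ :=
    (Set.toFinite {K : G.Subgraph | SubgraphBiconnected K ∧ H ≤ K}).exists_maximal ⟨H, hH, le_rfl⟩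
  exact ⟨B, ⟨hB, fun K hK hBK => (le_antisymm hBK (hmax ⟨hK, hHB.trans hBK⟩ hBK)).symm⟩, hHB⟩

namespace IsBlockGraph

theorem adj_of_mem_support_of_isCycle (hG : IsBlockGraph G) {c : G.Walk u u} (hc : c.IsCycle)
    {x y : V} (hx : x ∈ c.support) (hy : y ∈ c.support) (hxy : x ≠ y) : G.Adj x y := by
  obtain ⟨B, hB, hcB⟩ := hc.subgraphBiconnected.exists_isBlock_le
  exact (hG B hB x (hcB.1 (c.mem_verts_toSubgraph.2 hx)) y
    (hcB.1 (c.mem_verts_toSubgraph.2 hy)) hxy).adj_sub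

theorem adj_of_internallyDisjoint (hG : IsBlockGraph G) {p q : G.Walk u v} (hp : p.IsPath)
    (hq : q.IsPath) (hpq : ∀ z ∈ p.support, z ∈ q.support → z = u ∨ z = v) {w : V}
    (hw : w ∈ q.support) (hwu : w ≠ u) (hwv : w ≠ v) ⦃x y : V⦄
    (hx : x ∈ p.support ∨ x ∈ q.support) (hy : y ∈ p.support ∨ y ∈ q.support) (hxy : x ≠ y) :
    G.Adj x y := by
  have hp' := hp.support_nodup
  have hq' := hq.reverse.support_nodup
  rw [← Walk.cons_tail_support, List.nodup_cons] at hp' hq'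
  have hc : (p.append q.reverse).IsCycle := by
    refine hp.isCycle_append hq.reverse (List.disjoint_left.2 fun z hzp hzq => ?_)
      (.inr (by simpa using q.one_lt_length_of_mem_support hw hwu hwv))
    have hzq' : z ∈ q.support := by simpa using List.mem_of_mem_tail hzq
    rcases hpq z (List.mem_of_mem_tail hzp) hzq' with rfl | rfl
    · exact hp'.1 hzp
    · exact hq'.1 hzq
  refine hG.adj_of_mem_support_of_isCycle hc ?_ ?_ hxy <;>
    simpa [Walk.mem_support_append_iff]

/-- Subpaths of `p` and `q` closing a cycle would both be single edges, as the cycle spans a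
clique. -/
theorem eq_of_isChordless (hG : IsBlockGraph G) {p q : G.Walk u v} (hp : p.IsPath)
    (hq : q.IsPath) (hpc : p.IsChordless) (hqc : q.IsChordless) : p = q := by
  by_contra hne
  obtain ⟨u', v', p', q', hp', hq', hc⟩ := hp.exists_isCycle_of_ne hq hne
  have hlen : ∀ r : G.Walk u' v', r.IsPath → r.IsChordless → G.Adj u' v' → r.length = 1 :=
    fun r hr hrc hadj => hr.length_eq_one_of_mem_edges
      (hrc.mem_edges r.start_mem_support r.end_mem_support hadj)
  obtain rfl | huv := eq_or_ne u' v'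
  · rw [Walk.eq_nil_iff_nil.2 (Walk.isPath_iff_nil.1 (Walk.isPath_of_isSubwalk hp' hp)),
      Walk.eq_nil_iff_nil.2 (Walk.isPath_iff_nil.1 (Walk.isPath_of_isSubwalk hq' hq))] at hc
    exact hc.not_nil Walk.Nil.nil
  have hadj := hG.adj_of_mem_support_of_isCycle hc (p'.append q'.reverse).start_mem_support
    (by simp) huv
  have := hc.three_le_length
  rw [Walk.length_append, Walk.length_reverse,
    hlen p' (Walk.isPath_of_isSubwalk hp' hp) (hpc.of_isSubwalk hp hp') hadj,
    hlen q' (Walk.isPath_of_isSubwalk hq' hq) (hqc.of_isSubwalk hq hq') hadj] at this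
  omega

end IsBlockGraph

end BlockGraph

namespace InducedPath

variable {V : Type*} {G : SimpleGraph V}

theorem isChordless (P : InducedPath G) : P.walk.IsChordless :=
  Walk.isChordless_iff_forall_mem_edges.2 fun _ _ hx hy h => P.induced _ hx _ hy h

def ofWalk {u v : V} (p : G.Walk u v) (hp : p.IsPath) (hc : p.IsChordless) : InducedPath G :=
  ⟨u, v, p, hp, fun _ hx _ hy h => hc.mem_edges hx hy h⟩

def reverse (P : InducedPath G) : InducedPath G :=
  ofWalk P.walk.reverse P.isPath.reverse P.isChordless.reverse

@[simp] theorem reverse_first (P : InducedPath G) : P.reverse.first = P.last := rfl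

@[simp] theorem reverse_last (P : InducedPath G) : P.reverse.last = P.first := rfl

@[simp] theorem vertexSet_reverse (P : InducedPath G) : P.reverse.vertexSet = P.vertexSet := by
  ext; simp [vertexSet, reverse, ofWalk]

@[simp] theorem edgeSet_reverse (P : InducedPath G) : P.reverse.edgeSet = P.edgeSet := by
  ext; simp [edgeSet, reverse, ofWalk]

def ofSegment (P : InducedPath G) {u v : V} (σ : G.Walk u v) (h : σ.IsSegment P.walk) :
    InducedPath G :=
  ofWalk σ (h.isPath P.isPath) (h.isChordless P.isPath P.isChordless)

theorem first_mem (P : InducedPath G) : P.first ∈ P.vertexSet := P.walk.start_mem_support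

theorem last_mem (P : InducedPath G) : P.last ∈ P.vertexSet := P.walk.end_mem_support

theorem pathContains_ofSegment (P : InducedPath G) {u v : V} (σ : G.Walk u v)
    (h : σ.IsSegment P.walk) : PathContains G P (P.ofSegment σ h) :=
  ⟨fun _ hz => h.support_subset hz, fun _ he => h.edges_subset he⟩

theorem exists_suffix_inter_eq_singleton (R : InducedPath G) {S : Set V}
    (h : (R.vertexSet ∩ S).Nonempty) :
    ∃ Q : InducedPath G, PathContains G R Q ∧ Q.last = R.last ∧ Q.vertexSet ∩ S = {Q.first} := by
  obtain ⟨z, hz⟩ := h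
  obtain ⟨m, hm, q, r, hsplit, hr⟩ := R.walk.exists_append_last_mem ⟨z, hz.1, hz.2⟩
  have hrR : r.IsSegment R.walk := .inl (Walk.isSubwalk_of_append_right hsplit)
  exact ⟨R.ofSegment r hrR, R.pathContains_ofSegment r hrR, rfl,
    Set.eq_singleton_iff_unique_mem.2 ⟨⟨r.start_mem_support, hm⟩, fun u hu => hr u hu.1 hu.2⟩⟩

theorem exists_adj_mem_notMem (D : InducedPath G) {S : Set V} {w u : V}
    (hw : w ∈ D.vertexSet) (hwS : w ∈ S) (hu : u ∈ D.vertexSet) (huS : u ∉ S) :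
    ∃ η ε, η ∈ D.vertexSet ∧ ε ∈ D.vertexSet ∧ η ∈ S ∧ ε ∉ S ∧ G.Adj η ε := by
  obtain ⟨σ, hσ⟩ := D.walk.exists_isSegment hw hu
  obtain ⟨d, hd, hd₁, hd₂⟩ := σ.exists_boundary_dart S hwS huS
  exact ⟨d.fst, d.snd, hσ.support_subset (σ.dart_fst_mem_support_of_mem_darts hd),
    hσ.support_subset (σ.dart_snd_mem_support_of_mem_darts hd), hd₁, hd₂, d.adj⟩

end InducedPath

/-- The bypass of a shortest walk through vertices of `w` is chordless. -/
theorem exists_inducedPath_of_walk {V : Type*} {G : SimpleGraph V} {u v : V} (w : G.Walk u v) :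
    ∃ Q : InducedPath G, Q.first = u ∧ Q.last = v ∧ Q.vertexSet ⊆ {z | z ∈ w.support} := by
  classical
  have hex : ∃ n, ∃ p : G.Walk u v, p.support ⊆ w.support ∧ p.length = n :=
    ⟨_, w, List.Subset.refl _, rfl⟩
  obtain ⟨p, hpw, hpn⟩ := Nat.find_spec hex
  have hmin : ∀ q : G.Walk u v, q.support ⊆ p.bypass.support → p.bypass.length ≤ q.length :=
    fun q hq => p.length_bypass_le_length.trans (hpn ▸ Nat.find_min' hex
      ⟨q, List.Subset.trans hq (List.Subset.trans p.support_bypass_subset_support hpw), rfl⟩)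
  exact ⟨InducedPath.ofWalk p.bypass p.bypass_isPath (Walk.isChordless_of_forall_length_le hmin),
    rfl, rfl, fun z hz => hpw (p.support_bypass_subset_support hz)⟩

section PathContains

variable {V : Type*} {G : SimpleGraph V} {P Q R : InducedPath G}

theorem PathContains.trans (hPQ : PathContains G P Q) (hQR : PathContains G Q R) :
    PathContains G P R :=
  ⟨hQR.1.trans hPQ.1, hQR.2.trans hPQ.2⟩

theorem pathContains_reverse_left : PathContains G P.reverse Q ↔ PathContains G P Q := by
  simp [PathContains]

theorem pathContains_of_vertexSet_subset (h : Q.vertexSet ⊆ P.vertexSet) :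
    PathContains G P Q := by
  refine ⟨h, fun e he => ?_⟩
  induction e with
  | h x y =>
    exact P.induced x (h (Q.walk.fst_mem_support_of_mem_edges he)) y
      (h (Q.walk.snd_mem_support_of_mem_edges he)) (Q.walk.adj_of_mem_edges he)

theorem IsPathOfInd.of_pathContains {ℓ : ℕ} {F : Fin ℓ → InducedPath G}
    (hP : IsPathOfInd G F P) (h : PathContains G P Q) : IsPathOfInd G F Q :=
  h.1.trans hP

variable [Finite V]

theorem IsBlockGraph.pathContains_of_first_mem_of_last_mem (hG : IsBlockGraph G)
    (hf : Q.first ∈ P.vertexSet) (hl : Q.last ∈ P.vertexSet) : PathContains G P Q := by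
  obtain ⟨σ, hσ⟩ := P.walk.exists_isSegment hf hl
  have hσQ := hG.eq_of_isChordless Q.isPath (hσ.isPath P.isPath) Q.isChordless
    (hσ.isChordless P.isPath P.isChordless)
  exact pathContains_of_vertexSet_subset fun z hz => hσ.support_subset (hσQ ▸ hz)

theorem IsBlockGraph.exists_common_subpath (hG : IsBlockGraph G) {x y : V}
    (hx : x ∈ P.vertexSet ∩ Q.vertexSet) (hy : y ∈ P.vertexSet ∩ Q.vertexSet) :
    ∃ R : InducedPath G, R.first = x ∧ R.last = y ∧ PathContains G P R ∧ PathContains G Q R := by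
  obtain ⟨σ, hσ⟩ := P.walk.exists_isSegment hx.1 hy.1
  exact ⟨_, rfl, rfl, P.pathContains_ofSegment σ hσ,
    hG.pathContains_of_first_mem_of_last_mem hx.2 hy.2⟩

end PathContains

namespace IsOrientation

variable {V : Type*} {G : SimpleGraph V} {D : InducedPath G} {ψ : Fin 2 → V}

theorem first_mem_range (h : IsOrientation G D ψ) : D.first ∈ Set.range ψ :=
  h ▸ Set.mem_insert _ _

theorem last_mem_range (h : IsOrientation G D ψ) : D.last ∈ Set.range ψ :=
  h ▸ Set.mem_insert_of_mem _ rfl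

theorem eq_first_or_eq_last (h : IsOrientation G D ψ) (t : Fin 2) :
    ψ t = D.first ∨ ψ t = D.last := by
  have : ψ t ∈ D.boundary := h ▸ Set.mem_range_self t
  simpa [InducedPath.boundary] using this

theorem mem_vertexSet (h : IsOrientation G D ψ) (t : Fin 2) : ψ t ∈ D.vertexSet := by
  rcases h.eq_first_or_eq_last t with h | h <;> rw [h]
  exacts [D.first_mem, D.last_mem]

theorem mem_interior (h : IsOrientation G D ψ) {z : V} (hz : z ∈ D.vertexSet) (h0 : z ≠ ψ 0)
    (h1 : z ≠ ψ 1) : z ∈ D.interior := by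
  refine ⟨hz, fun hb => ?_⟩
  obtain ⟨t, rfl⟩ : z ∈ Set.range ψ := h ▸ hb
  fin_cases t <;> simp_all

theorem comp_rev (h : IsOrientation G D ψ) : IsOrientation G D (ψ ∘ Fin.rev) := by
  rwa [IsOrientation, Fin.rev_surjective.range_comp]

theorem exists_walk (h : IsOrientation G D ψ) :
    ∃ w : G.Walk (ψ 0) (ψ 1), w.IsPath ∧ ∀ z, z ∈ w.support ↔ z ∈ D.vertexSet := by
  by_cases h0 : ψ 0 = D.first
  · have h1 : ψ 1 = D.last := by
      obtain ⟨t, ht⟩ := h.last_mem_range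
      fin_cases t
      · rcases h.eq_first_or_eq_last 1 with h1 | h1 <;> simp_all
      · exact ht
    exact ⟨D.walk.copy h0.symm h1.symm, by simpa using D.isPath, by simp [InducedPath.vertexSet]⟩
  · have h0' := (h.eq_first_or_eq_last 0).resolve_left h0
    have h1 : ψ 1 = D.first := by
      obtain ⟨t, ht⟩ := h.first_mem_range
      fin_cases t
      · exact absurd ht h0
      · exact ht
    exact ⟨D.walk.reverse.copy h0'.symm h1.symm, by simpa using D.isPath.reverse,
      by simp [InducedPath.vertexSet]⟩

theorem exists_walk_to (h : IsOrientation G D ψ) {x : V} (hx : x ∈ D.vertexSet) :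
    ∃ w : G.Walk (ψ 0) x, (∀ z ∈ w.support, z ∈ D.vertexSet) ∧ (ψ 1 ∈ w.support → ψ 1 = x) := by
  obtain ⟨w, hw, hwD⟩ := h.exists_walk
  obtain ⟨q, hq, hq1⟩ := hw.exists_prefix ((hwD x).2 hx)
  exact ⟨q, fun z hz => (hwD z).1 (hq hz), hq1⟩

theorem exists_walk_from (h : IsOrientation G D ψ) {x : V} (hx : x ∈ D.vertexSet) :
    ∃ w : G.Walk x (ψ 1), (∀ z ∈ w.support, z ∈ D.vertexSet) ∧ (ψ 0 ∈ w.support → ψ 0 = x) := by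
  obtain ⟨w, hw, hwD⟩ := h.exists_walk
  obtain ⟨q, hq, hq0⟩ := hw.exists_suffix ((hwD x).2 hx)
  exact ⟨q, fun z hz => (hwD z).1 (hq hz), hq0⟩

end IsOrientation

theorem IsBlockGraph.pathContains_of_isOrientation {V : Type*} {G : SimpleGraph V} [Finite V]
    (hG : IsBlockGraph G) {D γ : InducedPath G} {ψ : Fin 2 → V} (hψ : IsOrientation G D ψ)
    (h0 : ψ 0 ∈ γ.vertexSet) (h1 : ψ 1 ∈ γ.vertexSet) : PathContains G γ D := by
  have hmem : ∀ t, ψ t ∈ γ.vertexSet := fun t => by fin_cases t <;> assumption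
  obtain ⟨s, hs⟩ := hψ.first_mem_range
  obtain ⟨t, ht⟩ := hψ.last_mem_range
  exact hG.pathContains_of_first_mem_of_last_mem (hs ▸ hmem s) (ht ▸ hmem t)

/-- The path with vertex set `S` is attached to `D` at its end `q` if it either meets `D` only in
the internal vertex `q` of `D`, or avoids `D` while `q` has two neighbours on `D`. Internal strands,
internal forks and double forks are, up to reversal, the paths attached to two different paths of
the family at their two ends. -/
def AttachedTo {V : Type*} {G : SimpleGraph V} (D : InducedPath G) (S : Set V) (q : V) : Prop :=
  (q ∈ D.interior ∧ S ∩ D.vertexSet = {q}) ∨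
    (S ∩ D.vertexSet = ∅ ∧
      ∃ x y, x ∈ D.vertexSet ∧ y ∈ D.vertexSet ∧ x ≠ y ∧ G.Adj q x ∧ G.Adj q y)

section MeetingPaths

variable {V : Type*} {G : SimpleGraph V} [Finite V] {γ₁ γ₂ D : InducedPath G}

/-- The last vertex of `γ₁` on `γ₂` lies on a cycle through `D`, `γ₁.last` and `γ₂.first`. -/
theorem IsBlockGraph.exists_adj_last_adj_first (hG : IsBlockGraph G)
    (h₁ : γ₁.vertexSet ∩ D.vertexSet = {γ₁.last}) (h₂ : γ₂.vertexSet ∩ D.vertexSet = {γ₂.first})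
    (hne : γ₁.last ≠ γ₂.first) (hmeet : (γ₁.vertexSet ∩ γ₂.vertexSet).Nonempty) :
    ∃ p ∈ γ₁.vertexSet ∩ γ₂.vertexSet, G.Adj p γ₁.last ∧ G.Adj p γ₂.first := by
  obtain ⟨⟨-, hxD⟩, hD₁⟩ := Set.eq_singleton_iff_unique_mem.1 h₁
  obtain ⟨⟨-, hyD⟩, hD₂⟩ := Set.eq_singleton_iff_unique_mem.1 h₂
  obtain ⟨m0, hm0⟩ := hmeet
  obtain ⟨m, hm₂, q, g, hsplit, hg⟩ := γ₁.walk.exists_append_last_mem ⟨m0, hm0.1, hm0.2⟩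
  have hgγ₁ := Walk.isSubwalk_of_append_right hsplit
  have hm₁ : m ∈ γ₁.vertexSet := hgγ₁.support_subset g.start_mem_support
  have hmx : m ≠ γ₁.last := fun h => hne (hD₂ _ ⟨h ▸ hm₂, hxD⟩)
  have hym : γ₂.first ≠ m := fun h => hne (hD₁ _ ⟨h ▸ hm₁, hyD⟩).symm
  obtain ⟨σ, hσ⟩ := γ₂.walk.exists_isSegment hm₂ γ₂.walk.start_mem_support
  obtain ⟨β, hβ⟩ := D.walk.exists_isSegment hyD hxD
  have hr : (σ.append β).IsPath := (hσ.isPath γ₂.isPath).append_of_support_inter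
    (hβ.isPath D.isPath) fun z hzσ hzβ => hD₂ z ⟨hσ.support_subset hzσ, hβ.support_subset hzβ⟩
  have hy : γ₂.first ∈ (σ.append β).support :=
    (Walk.mem_support_append_iff _ _).2 (.inr β.start_mem_support)
  have hgr : ∀ z ∈ g.support, z ∈ (σ.append β).support → z = m ∨ z = γ₁.last := by
    intro z hzg hzr
    rcases (Walk.mem_support_append_iff _ _).1 hzr with hzσ | hzβ
    · exact .inl (hg z hzg (hσ.support_subset hzσ))
    · exact .inr (hD₁ z ⟨hgγ₁.support_subset hzg, hβ.support_subset hzβ⟩)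
  have hadj := hG.adj_of_internallyDisjoint (Walk.isPath_of_isSubwalk hgγ₁ γ₁.isPath) hr hgr hy
    hym hne.symm
  exact ⟨m, ⟨hm₁, hm₂⟩, hadj (.inl g.start_mem_support) (.inl g.end_mem_support) hmx,
    hadj (.inl g.start_mem_support) (.inr hy) hym.symm⟩

theorem IsBlockGraph.eq_or_eq_of_mem_before_meet (hG : IsBlockGraph G)
    (h₁ : γ₁.vertexSet ∩ D.vertexSet = {γ₁.last}) (h₂ : γ₂.vertexSet ∩ D.vertexSet = {γ₂.first})
    (hy : γ₂.first ∉ γ₁.vertexSet) {z : V} {f : G.Walk γ₂.first z} {g : G.Walk z γ₂.last}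
    (hsplit : γ₂.walk = f.append g) (hz : z ∈ γ₁.vertexSet)
    (hf : ∀ u ∈ f.support, u ∈ γ₁.vertexSet → u = z) {u : V} (hu : u ∈ f.support) :
    u = γ₂.first ∨ u = z := by
  have hfγ₂ : f.IsSegment γ₂.walk := .inl (Walk.isSubwalk_of_append_left hsplit)
  set Q := γ₂.ofSegment f hfγ₂
  have hQ₂ : PathContains G γ₂ Q := γ₂.pathContains_ofSegment f hfγ₂
  obtain ⟨p, hp, -, hpy⟩ := hG.exists_adj_last_adj_first h₁
    (inter_eq_singleton_of_subset hQ₂.1 h₂ Q.first_mem) (fun h => hy (h ▸ γ₁.last_mem))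
    ⟨z, hz, Q.last_mem⟩
  obtain rfl := hf p hp.2 hp.1
  exact Q.isChordless.eq_or_eq_of_adj Q.isPath hpy.symm hu

/-- The edge `ηε` closes a cycle through the first vertex of `γ₂` on `γ₁` after `η`. -/
theorem IsBlockGraph.exists_adj_adj_of_adj (hG : IsBlockGraph G) {η ε : V}
    (hη₁ : η ∈ γ₁.vertexSet) (hη₂ : η ∉ γ₂.vertexSet) (hε₂ : ε ∈ γ₂.vertexSet)
    (hε₁ : ε ∉ γ₁.vertexSet) (hηε : G.Adj η ε) (hmeet : (γ₁.vertexSet ∩ γ₂.vertexSet).Nonempty) :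
    ∃ v ∈ γ₁.vertexSet ∩ γ₂.vertexSet, G.Adj v η ∧ G.Adj v ε := by
  obtain ⟨m0, hm0⟩ := hmeet
  obtain ⟨σ₁, hσ₁⟩ := γ₁.walk.exists_isSegment hη₁ hm0.1
  obtain ⟨v, hv₂, q, _, hsplit, hq⟩ := σ₁.exists_append_first_mem ⟨m0, σ₁.end_mem_support, hm0.2⟩
  have hqσ₁ := Walk.isSubwalk_of_append_left hsplit
  have hv₁ : v ∈ γ₁.vertexSet := hσ₁.support_subset (hqσ₁.support_subset q.end_mem_support)
  obtain ⟨σ₂, hσ₂⟩ := γ₂.walk.exists_isSegment hv₂ hε₂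
  have hr : (q.append σ₂).IsPath :=
    (Walk.isPath_of_isSubwalk hqσ₁ (hσ₁.isPath γ₁.isPath)).append_of_support_inter
      (hσ₂.isPath γ₂.isPath) fun z hzq hzσ => hq z hzq (hσ₂.support_subset hzσ)
  have hv : v ∈ (q.append σ₂).support :=
    (Walk.mem_support_append_iff _ _).2 (.inl q.end_mem_support)
  have hvη : v ≠ η := fun h => hη₂ (h ▸ hv₂)
  have hvε : v ≠ ε := fun h => hε₁ (h ▸ hv₁)
  have hadj := hG.adj_of_internallyDisjoint (Walk.IsPath.of_adj hηε) hr
    (fun z hz _ => by simpa using hz) hv hvη hvε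
  exact ⟨v, ⟨hv₁, hv₂⟩, hadj (.inr hv) (.inl (by simp)) hvη, hadj (.inr hv) (.inl (by simp)) hvε⟩

theorem IsBlockGraph.mem_interior_of_mem_inter (hG : IsBlockGraph G)
    (hD : D.vertexSet ⊆ γ₁.vertexSet ∪ γ₂.vertexSet) (h₁ : ¬ PathContains G γ₁ D)
    (h₂ : ¬ PathContains G γ₂ D) {u : V} (hu : u ∈ D.vertexSet)
    (hu₁₂ : u ∈ γ₁.vertexSet ∩ γ₂.vertexSet) : u ∈ D.interior := by
  refine ⟨hu, fun hb => ?_⟩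
  rcases hb with rfl | rfl
  · rcases hD D.last_mem with h | h
    exacts [h₁ (hG.pathContains_of_first_mem_of_last_mem hu₁₂.1 h),
      h₂ (hG.pathContains_of_first_mem_of_last_mem hu₁₂.2 h)]
  · rcases hD D.first_mem with h | h
    exacts [h₁ (hG.pathContains_of_first_mem_of_last_mem h hu₁₂.1),
      h₂ (hG.pathContains_of_first_mem_of_last_mem h hu₁₂.2)]

/-- `p` is the common end of `γ₁` and `γ₂` on `D` if there is one, and otherwise the vertex of
`exists_adj_last_adj_first`. -/
theorem IsBlockGraph.exists_attachedTo (hG : IsBlockGraph G) {ψ : Fin 2 → V}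
    (hψ : IsOrientation G D ψ) (h₁ : γ₁.vertexSet ∩ D.vertexSet = {γ₁.last})
    (h₂ : γ₂.vertexSet ∩ D.vertexSet = {γ₂.first}) (hx : γ₁.last ≠ ψ 0) (hy : γ₂.first ≠ ψ 1)
    (hmeet : (γ₁.vertexSet ∩ γ₂.vertexSet).Nonempty) :
    ∃ p ∈ γ₁.vertexSet ∩ γ₂.vertexSet,
      ∀ S ⊆ γ₁.vertexSet ∩ γ₂.vertexSet, p ∈ S → AttachedTo D S p := by
  obtain ⟨⟨hx₁, hxD⟩, hD₁⟩ := Set.eq_singleton_iff_unique_mem.1 h₁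
  obtain ⟨⟨hy₂, hyD⟩, hD₂⟩ := Set.eq_singleton_iff_unique_mem.1 h₂
  by_cases hxy : γ₁.last = γ₂.first
  · refine ⟨γ₁.last, ⟨hx₁, hxy ▸ hy₂⟩, fun S hS hpS => .inl ⟨?_, ?_⟩⟩
    · exact hψ.mem_interior hxD hx (hxy ▸ hy)
    · exact Set.eq_singleton_iff_unique_mem.2 ⟨⟨hpS, hxD⟩, fun z hz => hD₁ z ⟨(hS hz.1).1, hz.2⟩⟩
  · obtain ⟨p, hp, hpx, hpy⟩ := hG.exists_adj_last_adj_first h₁ h₂ hxy hmeet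
    refine ⟨p, hp, fun S hS _ => .inr ⟨?_, _, _, hxD, hyD, hxy, hpx, hpy⟩⟩
    refine Set.eq_empty_of_forall_notMem fun z hz => hxy ?_
    exact (hD₁ z ⟨(hS hz.1).1, hz.2⟩).symm.trans (hD₂ z ⟨(hS hz.1).2, hz.2⟩)

/-- A path `D` on `γ₁ ∪ γ₂` lying on neither of them either meets their common part, necessarily in
internal vertices of `D`, or has an edge from `γ₁ \ γ₂` to `γ₂ \ γ₁`. -/
theorem IsBlockGraph.exists_attachedTo_of_subset_union (hG : IsBlockGraph G)
    (hD : D.vertexSet ⊆ γ₁.vertexSet ∪ γ₂.vertexSet) (h₁ : ¬ PathContains G γ₁ D)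
    (h₂ : ¬ PathContains G γ₂ D) (hmeet : (γ₁.vertexSet ∩ γ₂.vertexSet).Nonempty) {p : V}
    (hp : p ∈ γ₁.vertexSet ∩ γ₂.vertexSet) :
    ∃ Q : InducedPath G, PathContains G γ₁ Q ∧ PathContains G γ₂ Q ∧ Q.last = p ∧
      AttachedTo D Q.vertexSet Q.first := by
  by_cases hmid : ∃ u ∈ D.vertexSet, u ∈ γ₁.vertexSet ∩ γ₂.vertexSet
  · obtain ⟨u, huD, hu⟩ := hmid
    obtain ⟨R, rfl, rfl, hR₁, hR₂⟩ := hG.exists_common_subpath hu hp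
    obtain ⟨Q, hRQ, hQl, hQD⟩ := R.exists_suffix_inter_eq_singleton ⟨R.first, R.first_mem, huD⟩
    have hQf := (Set.eq_singleton_iff_unique_mem.1 hQD).1
    refine ⟨Q, hR₁.trans hRQ, hR₂.trans hRQ, hQl, .inl ⟨?_, hQD⟩⟩
    exact hG.mem_interior_of_mem_inter hD h₁ h₂ hQf.2
      ⟨(hR₁.trans hRQ).1 hQf.1, (hR₂.trans hRQ).1 hQf.1⟩
  · simp only [not_exists, not_and] at hmid
    obtain ⟨w, hwD, hw₂⟩ := Set.not_subset.1 fun h => h₂ (pathContains_of_vertexSet_subset h)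
    obtain ⟨u, huD, hu₁⟩ := Set.not_subset.1 fun h => h₁ (pathContains_of_vertexSet_subset h)
    obtain ⟨η, ε, hηD, hεD, hη₁, hε₁, hηε⟩ :=
      D.exists_adj_mem_notMem hwD ((hD hwD).resolve_right hw₂) huD hu₁
    obtain ⟨v, hv, hvη, hvε⟩ := hG.exists_adj_adj_of_adj hη₁ (fun hη₂ => hmid η hηD ⟨hη₁, hη₂⟩)
      ((hD hεD).resolve_left hε₁) hε₁ hηε hmeet
    obtain ⟨R, rfl, rfl, hR₁, hR₂⟩ := hG.exists_common_subpath hv hp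
    refine ⟨R, hR₁, hR₂, rfl, .inr ⟨?_, η, ε, hηD, hεD, hηε.ne, hvη, hvε⟩⟩
    exact Set.eq_empty_of_forall_notMem fun z hz => hmid z hz.2 ⟨hR₁.1 hz.1, hR₂.1 hz.1⟩

end MeetingPaths

section Family

variable {V : Type*} {G : SimpleGraph V} {ℓ : ℕ} {P : Fin ℓ → InducedPath G}
  {φ : Fin ℓ → Fin 2 → V} {i j : Fin ℓ} {Q : InducedPath G}

theorem hasForbidden_of_attachedTo (hij : i ≠ j) (hQ : IsPathOfInd G P Q)
    (hQP : ∀ k, ¬ PathContains G Q (P k)) (hi : AttachedTo (P i) Q.vertexSet Q.first)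
    (hj : AttachedTo (P j) Q.vertexSet Q.last) : HasForbidden G P := by
  rcases hi with ⟨hqi, hi⟩ | ⟨hi, a, b, ha, hb, hab, hqa, hqb⟩ <;>
    rcases hj with ⟨hqj, hj⟩ | ⟨hj, c, d, hc, hd, hcd, hqc, hqd⟩
  · exact .inl ⟨i, j, Q, hij, hQ, hqi, hqj, hi, hj, hQP⟩
  · exact .inr <| .inl ⟨i, j, Q, c, d, hij, hQ, hqi, hi, hj, hc, hd, hcd, hqc, hqd, hQP⟩
  · refine .inr <| .inl ⟨j, i, Q.reverse, a, b, hij.symm, by simpa [IsPathOfInd] using hQ, hqj,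
      by simpa using hj, by simpa using hi, ha, hb, hab, hqa, hqb, ?_⟩
    simpa [pathContains_reverse_left] using hQP
  · exact .inr <| .inr <| .inl ⟨i, j, Q, a, b, c, d, hij, hQ, hi, hj, ha, hb, hab, hc, hd, hcd,
      hqa, hqb, hqc, hqd, hQP⟩

theorem IsStrand.reverse (h : IsStrand G P φ i j Q) :
    IsStrand G P (fun k => φ k ∘ Fin.rev) j i Q.reverse := by
  obtain ⟨hij, hQ, hfirst, hlast, hi, hj, hQP⟩ := h
  exact ⟨hij.symm, by simpa [IsPathOfInd] using hQ, hlast, hfirst, by simpa using hj,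
    by simpa using hi, by simpa [pathContains_reverse_left] using hQP⟩

theorem IsStrand.first_mem (h : IsStrand G P φ i j Q) : Q.first ∈ (P i).vertexSet :=
  (Set.eq_singleton_iff_unique_mem.1 h.2.2.2.2.1).1.2

theorem IsStrand.last_mem (h : IsStrand G P φ i j Q) : Q.last ∈ (P j).vertexSet :=
  (Set.eq_singleton_iff_unique_mem.1 h.2.2.2.2.2.1).1.2

theorem IsStrand.isStrand_prefix {k : Fin ℓ} (h : IsStrand G P φ j k Q) (hij : i ≠ j) {δ : V}
    (hδ : δ ∈ (P i).vertexSet) (hδ0 : δ ≠ φ i 0) {d : G.Walk Q.first δ} {e : G.Walk δ Q.last}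
    (hsplit : Q.walk = d.append e) (hd : ∀ z ∈ d.support, z ∈ (P i).vertexSet → z = δ) :
    IsStrand G P φ j i (Q.ofSegment d (.inl (Walk.isSubwalk_of_append_left hsplit))) := by
  obtain ⟨-, hQ, hfirst, -, hQj, -, hnc⟩ := h
  have hc := Q.pathContains_ofSegment d (.inl (Walk.isSubwalk_of_append_left hsplit))
  exact ⟨hij.symm, hQ.of_pathContains hc, hfirst, hδ0,
    inter_eq_singleton_of_subset hc.1 hQj d.start_mem_support,
    Set.eq_singleton_iff_unique_mem.2 ⟨⟨d.end_mem_support, hδ⟩, fun u hu => hd u hu.1 hu.2⟩,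
    fun k hk => hnc k (hc.trans hk)⟩

theorem mem_famVerts {z : V} (h : z ∈ (P i).vertexSet) : z ∈ famVerts G P :=
  Set.mem_iUnion.2 ⟨i, h⟩

theorem kArc_of_walk {a c : Fin ℓ} (W : G.Walk (φ a 0) (φ c 1))
    (hW : ∀ z ∈ W.support, z ∈ famVerts G P)
    (hk : ∀ k, ¬ (P k).vertexSet ⊆ {z | z ∈ W.support}) : KArc G P φ a c := by
  obtain ⟨Q, hQf, hQl, hQW⟩ := exists_inducedPath_of_walk W
  exact ⟨Q, fun z hz => hW z (hQW hz), by rw [hQf, hQl], fun k hk' => hk k (hk'.1.trans hQW)⟩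

end Family

section Strands

variable {V : Type*} {G : SimpleGraph V} [Finite V] {ℓ : ℕ} {P : Fin ℓ → InducedPath G}
  {φ : Fin ℓ → Fin 2 → V} {a b c : Fin ℓ} {γ₁ γ₂ : InducedPath G}

/-- The common part of two meeting strands running in opposite directions between `P a` and `P b`
would contain a piece attached to both. -/
theorem IsBlockGraph.not_meet_of_isStrand_of_isStrand (hG : IsBlockGraph G)
    (horient : ∀ i, IsOrientation G (P i) (φ i)) (hforb : ¬ HasForbidden G P)
    (h₁ : IsStrand G P φ a b γ₁) (h₂ : IsStrand G P φ b a γ₂) :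
    ¬ (γ₁.vertexSet ∩ γ₂.vertexSet).Nonempty := by
  intro hmeet
  obtain ⟨hab, hγ₁, hx₀, hx₁, hA₁, hB₁, hnc₁⟩ := h₁
  obtain ⟨-, -, hy₀, hy₁, hB₂, hA₂, -⟩ := h₂
  obtain ⟨pB, hpB, hB⟩ := hG.exists_attachedTo (horient b) hB₁ hB₂ hx₁ hy₀ hmeet
  obtain ⟨pA, hpA, hA⟩ := hG.exists_attachedTo (horient a) hA₂ hA₁ hy₁ hx₀
    (Set.inter_comm _ _ ▸ hmeet)
  obtain ⟨Q, rfl, rfl, hQ₁, hQ₂⟩ := hG.exists_common_subpath ⟨hpA.2, hpA.1⟩ hpB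
  have hQ : Q.vertexSet ⊆ γ₁.vertexSet ∩ γ₂.vertexSet := Set.subset_inter hQ₁.1 hQ₂.1
  exact hforb (hasForbidden_of_attachedTo hab (hγ₁.of_pathContains hQ₁)
    (fun k hk => hnc₁ k (hQ₁.trans hk)) (hA _ (hQ.trans (Set.inter_comm _ _).subset) Q.first_mem)
    (hB _ hQ Q.last_mem))

/-- Otherwise the part of `γ₂` up to its first vertex on `P a` is a strand back to `P a`, hence
avoids `γ₁`, and then `γ₂` reaches `γ₁` in one step. -/
theorem IsBlockGraph.orientation_one_notMem (hG : IsBlockGraph G)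
    (hdisj : PairwiseVertexDisjoint G P) (horient : ∀ i, IsOrientation G (P i) (φ i))
    (hforb : ¬ HasForbidden G P) (h₁ : IsStrand G P φ a b γ₁) (h₂ : IsStrand G P φ b c γ₂)
    (hmeet : (γ₁.vertexSet ∩ γ₂.vertexSet).Nonempty) : φ a 1 ∉ γ₂.vertexSet := by
  intro hφ
  obtain ⟨hab, -, -, -, -, hB₁, -⟩ := id h₁
  obtain ⟨-, -, -, -, hB₂, -, hnc₂⟩ := id h₂
  have hφ0 : φ a 0 ∉ γ₂.vertexSet := fun h0 =>
    hnc₂ a (hG.pathContains_of_isOrientation (horient a) h0 hφ)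
  obtain ⟨δ, hδA, d, e, hsplit, hd⟩ :=
    γ₂.walk.exists_append_first_mem ⟨_, hφ, (horient a).mem_vertexSet 1⟩
  have hδ₂ : δ ∈ γ₂.vertexSet :=
    (Walk.isSubwalk_of_append_left hsplit).support_subset d.end_mem_support
  have hd₁ : ∀ u ∈ d.support, u ∉ γ₁.vertexSet := fun u hud hu₁ =>
    hG.not_meet_of_isStrand_of_isStrand horient hforb h₁
      (h₂.isStrand_prefix hab hδA (fun h => hφ0 (h ▸ hδ₂)) hsplit hd) ⟨u, hu₁, hud⟩
  obtain ⟨m0, hm0₁, hm0₂⟩ := hmeet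
  have hm0e : m0 ∈ e.support := by
    rw [InducedPath.vertexSet, Set.mem_ofPred_eq, hsplit, Walk.mem_support_append_iff] at hm0₂
    exact hm0₂.resolve_left fun h => hd₁ m0 h hm0₁
  obtain ⟨z, hz₁, f, g, rfl, hf⟩ := e.exists_append_first_mem ⟨m0, hm0e, hm0₁⟩
  rw [Walk.append_assoc] at hsplit
  have hdf : ∀ u ∈ (d.append f).support, u ∈ γ₁.vertexSet → u = z := by
    intro u hu hu₁
    rcases (Walk.mem_support_append_iff _ _).1 hu with hu | hu
    exacts [absurd hu₁ (hd₁ u hu), hf u hu hu₁]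
  rcases hG.eq_or_eq_of_mem_before_meet hB₁ hB₂ (hd₁ _ d.start_mem_support) hsplit hz₁ hdf
    ((Walk.mem_support_append_iff _ _).2 (.inl d.end_mem_support)) with h | h
  · exact (hdisj a b hab).ne_of_mem hδA (Set.eq_singleton_iff_unique_mem.1 hB₂).1.2 h
  · exact hd₁ δ d.end_mem_support (h ▸ hz₁)

theorem IsBlockGraph.orientation_zero_notMem (hG : IsBlockGraph G)
    (hdisj : PairwiseVertexDisjoint G P) (horient : ∀ i, IsOrientation G (P i) (φ i))
    (hforb : ¬ HasForbidden G P) (h₁ : IsStrand G P φ a b γ₁) (h₂ : IsStrand G P φ b c γ₂)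
    (hmeet : (γ₁.vertexSet ∩ γ₂.vertexSet).Nonempty) : φ c 0 ∉ γ₁.vertexSet := by
  simpa using hG.orientation_one_notMem hdisj (fun i => (horient i).comp_rev) hforb h₂.reverse
    h₁.reverse (by simpa [Set.inter_comm] using hmeet)

/-- A path `P k` lying on two meeting strands through `P b` would be joined to `P b` by a piece of
their common part attached to both. -/
theorem IsBlockGraph.not_vertexSet_subset_union (hG : IsBlockGraph G)
    (horient : IsOrientation G (P b) (φ b)) (hforb : ¬ HasForbidden G P) {k : Fin ℓ}
    (hkb : k ≠ b) (h₁ : IsStrand G P φ a b γ₁) (h₂ : IsStrand G P φ b c γ₂)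
    (hmeet : (γ₁.vertexSet ∩ γ₂.vertexSet).Nonempty) :
    ¬ (P k).vertexSet ⊆ γ₁.vertexSet ∪ γ₂.vertexSet := by
  intro hD
  obtain ⟨-, -, -, hx₁, -, hB₁, hnc₁⟩ := h₁
  obtain ⟨-, hγ₂, hy₀, -, hB₂, -, hnc₂⟩ := h₂
  obtain ⟨p, hp, hB⟩ := hG.exists_attachedTo horient hB₁ hB₂ hx₁ hy₀ hmeet
  obtain ⟨Q, hQ₁, hQ₂, rfl, hQk⟩ :=
    hG.exists_attachedTo_of_subset_union hD (hnc₁ k) (hnc₂ k) hmeet hp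
  exact hforb (hasForbidden_of_attachedTo hkb (hγ₂.of_pathContains hQ₂)
    (fun j hj => hnc₂ j (hQ₂.trans hj)) hQk (hB _ (Set.subset_inter hQ₁.1 hQ₂.1) Q.last_mem))

theorem IsBlockGraph.not_vertexSet_subset_of_isStrand (hG : IsBlockGraph G)
    (hdisj : PairwiseVertexDisjoint G P) (horient : ∀ i, IsOrientation G (P i) (φ i))
    (hforb : ¬ HasForbidden G P) (h₁ : IsStrand G P φ a b γ₁) (h₂ : IsStrand G P φ b c γ₂)
    (hac : a ≠ c) {v : V} (hv : v ∈ γ₁.vertexSet ∩ γ₂.vertexSet)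
    {A₀ : G.Walk (φ a 0) γ₁.first} (hA₀ : ∀ z ∈ A₀.support, z ∈ (P a).vertexSet)
    (hφa : φ a 1 ∈ A₀.support → φ a 1 = γ₁.first)
    {S₁ : G.Walk γ₁.first v} (hS₁ : ∀ z ∈ S₁.support, z ∈ γ₁.vertexSet)
    (hx₁ : γ₁.last ∈ S₁.support → γ₁.last = v)
    {S₂ : G.Walk v γ₂.last} (hS₂ : ∀ z ∈ S₂.support, z ∈ γ₂.vertexSet)
    (hy₀ : γ₂.first ∈ S₂.support → γ₂.first = v)
    {C₀ : G.Walk γ₂.last (φ c 1)} (hC₀ : ∀ z ∈ C₀.support, z ∈ (P c).vertexSet)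
    (hφc : φ c 0 ∈ C₀.support → φ c 0 = γ₂.last) (k : Fin ℓ) :
    ¬ (P k).vertexSet ⊆ {z | z ∈ (A₀.append (S₁.append (S₂.append C₀))).support} := by
  intro hk
  replace hk : ∀ z ∈ (P k).vertexSet,
      z ∈ A₀.support ∨ z ∈ S₁.support ∨ z ∈ S₂.support ∨ z ∈ C₀.support :=
    fun z hz => by simpa using hk hz
  obtain ⟨hab, -, hx₀, -, hA₁, hB₁, hnc₁⟩ := id h₁
  obtain ⟨hbc, -, -, hy₁, hB₂, hC₂, -⟩ := id h₂
  have hdisj' : ∀ {i j z}, i ≠ j → z ∈ (P i).vertexSet → z ∉ (P j).vertexSet :=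
    fun hij hi hj => (hdisj _ _ hij).ne_of_mem hi hj rfl
  rcases eq_or_ne k a with rfl | hka
  · rcases hk _ ((horient k).mem_vertexSet 1) with h | h | h | h
    · exact hx₀ (hφa h).symm
    · exact hx₀ (hA₁.subset ⟨hS₁ _ h, (horient k).mem_vertexSet 1⟩).symm
    · exact hG.orientation_one_notMem hdisj horient hforb h₁ h₂ ⟨v, hv⟩ (hS₂ _ h)
    · exact hdisj' hac ((horient k).mem_vertexSet 1) (hC₀ _ h)
  rcases eq_or_ne k c with rfl | hkc
  · rcases hk _ ((horient k).mem_vertexSet 0) with h | h | h | h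
    · exact hdisj' hac (hA₀ _ h) ((horient k).mem_vertexSet 0)
    · exact hG.orientation_zero_notMem hdisj horient hforb h₁ h₂ ⟨v, hv⟩ (hS₁ _ h)
    · exact hy₁ (hC₂.subset ⟨hS₂ _ h, (horient k).mem_vertexSet 0⟩).symm
    · exact hy₁ (hφc h).symm
  rcases eq_or_ne k b with rfl | hkb
  · refine hnc₁ k (pathContains_of_vertexSet_subset fun z hz => ?_)
    suffices z = v from this ▸ hv.1
    rcases hk z hz with h | h | h | h
    · exact absurd hz (hdisj' hab (hA₀ _ h))
    · obtain rfl : z = γ₁.last := hB₁.subset ⟨hS₁ _ h, hz⟩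
      exact hx₁ h
    · obtain rfl : z = γ₂.first := hB₂.subset ⟨hS₂ _ h, hz⟩
      exact hy₀ h
    · exact absurd hz (hdisj' hbc.symm (hC₀ _ h))
  refine hG.not_vertexSet_subset_union (horient b) hforb hkb h₁ h₂ ⟨v, hv⟩ fun z hz => ?_
  rcases hk z hz with h | h | h | h
  · exact absurd (hA₀ _ h) (hdisj' hka hz)
  · exact .inl (hS₁ _ h)
  · exact .inr (hS₂ _ h)
  · exact absurd (hC₀ _ h) (hdisj' hkc hz)

end Strands

theorem blockGraph_strands_compose_arc_general {V : Type*} [Fintype V]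
    (G : SimpleGraph V) (hBG : IsBlockGraph G) (ℓ : ℕ) (P : Fin ℓ → InducedPath G)
    (hdisj : PairwiseVertexDisjoint G P) (φ : Fin ℓ → Fin 2 → V)
    (horient : ∀ i, IsOrientation G (P i) (φ i))
    (hforb : ¬ HasForbidden G P)
    (a b c : Fin ℓ) (γ₁ γ₂ : InducedPath G)
    (h₁ : IsStrand G P φ a b γ₁) (h₂ : IsStrand G P φ b c γ₂)
    (hmeet : (γ₁.vertexSet ∩ γ₂.vertexSet).Nonempty) :
    KArc G P φ a c := by
  have hac : a ≠ c := by
    rintro rfl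
    exact hBG.not_meet_of_isStrand_of_isStrand horient hforb h₁ h₂ hmeet
  obtain ⟨v, hv₁, hv₂⟩ := hmeet
  obtain ⟨A₀, hA₀, hφa⟩ := (horient a).exists_walk_to h₁.first_mem
  obtain ⟨S₁, hS₁, hx₁⟩ := γ₁.isPath.exists_prefix hv₁
  obtain ⟨S₂, hS₂, hy₀⟩ := γ₂.isPath.exists_suffix hv₂
  obtain ⟨C₀, hC₀, hφc⟩ := (horient c).exists_walk_from h₂.last_mem
  refine kArc_of_walk _ (fun z hz => ?_) (hBG.not_vertexSet_subset_of_isStrand hdisj horient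
    hforb h₁ h₂ hac ⟨hv₁, hv₂⟩ hA₀ hφa hS₁ hx₁ hS₂ hy₀ hC₀ hφc)
  simp only [Walk.mem_support_append_iff] at hz
  rcases hz with h | h | h | h
  exacts [mem_famVerts (hA₀ z h), h₁.2.1 (hS₁ h), h₂.2.1 (hS₂ h), mem_famVerts (hC₀ z h)]

/-- **Theorem (Statement 12).** Suppose `P_ind` contains no internal strand, internal
fork, double fork, or complete ladder. If `γ₁` is a strand from `P a` to `P b`, `γ₂`
is a strand from `P b` to `P c`, and `γ₁` and `γ₂` intersect, then `K_{P_ind}`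
contains the arc `(a,c)`. -/
theorem blockGraph_strands_compose_arc {V : Type*} [Fintype V] [DecidableEq V]
    (G : SimpleGraph V) (hBG : IsBlockGraph G) (ℓ : ℕ) (P : Fin ℓ → InducedPath G)
    (hdisj : PairwiseVertexDisjoint G P) (φ : Fin ℓ → Fin 2 → V)
    (horient : ∀ i, IsOrientation G (P i) (φ i))
    (hforb : ¬ HasForbidden G P)
    (a b c : Fin ℓ) (γ₁ γ₂ : InducedPath G)
    (h₁ : IsStrand G P φ a b γ₁) (h₂ : IsStrand G P φ b c γ₂)
    (hmeet : (γ₁.vertexSet ∩ γ₂.vertexSet).Nonempty) :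
    KArc G P φ a c :=
  blockGraph_strands_compose_arc_general G hBG ℓ P hdisj φ horient hforb a b c γ₁ γ₂ h₁ h₂ hmeet
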